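/- Let H be a Hopf algebra with copivotal form w and convolution inverse w̄, and let ℓ ∈ H be a dual quantum trace (Δᵒᵖ(ℓ) = (id ⊗ S²)Δ(ℓ)). Then χ := w̄(ℓ⁽¹⁾)·ℓ⁽²⁾ is a dual trace: Δᵒᵖ(χ) = Δ(χ). -/

import Mathlib

open TensorProduct

/-- Convolution product of linear forms on a bialgebra. -/
noncomputable def conv {k H : Type*} [CommSemiring k] [Semiring H] [Bialgebra k H]
    (f g : H →ₗ[k] k) : H →ₗ[k] k :=
  LinearMap.mul' k k ∘ₗ TensorProduct.map f g ∘ₗ Coalgebra.comul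

/-- `x ↦ f(x⁽¹⁾)·x⁽²⁾`. -/
noncomputable def actL {k H : Type*} [CommSemiring k] [Semiring H] [Bialgebra k H]
    (f : H →ₗ[k] k) : H →ₗ[k] H :=
  (TensorProduct.lid k H).toLinearMap ∘ₗ TensorProduct.map f LinearMap.id ∘ₗ Coalgebra.comul

/-- `x ↦ x⁽¹⁾·f(x⁽²⁾)`. -/
noncomputable def actR {k H : Type*} [CommSemiring k] [Semiring H] [Bialgebra k H]
    (f : H →ₗ[k] k) : H →ₗ[k] H :=
  (TensorProduct.rid k H).toLinearMap ∘ₗ TensorProduct.map LinearMap.id f ∘ₗ Coalgebra.comul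

/-!
With `L_f x = f(x⁽¹⁾)·x⁽²⁾` and `R_f x = x⁽¹⁾·f(x⁽²⁾)`, coassociativity gives
`Δ ∘ L_f = (L_f ⊗ id) ∘ Δ`, `Δ ∘ R_f = (id ⊗ R_f) ∘ Δ`, `L_f R_g = R_g L_f`, `L_f L_g = L_{g * f}`
and `g ∘ L_f = f * g`. Since `S² = R_w̄ L_w` and `w * w̄ = ε`, this yields `w̄ ∘ S² = w̄` and
`L_w̄ ∘ S² = R_w̄`. Applying `id ⊗ w̄` to `Δᵒᵖ(ℓ) = (id ⊗ S²)Δ(ℓ)` shows `χ = L_w̄ ℓ = R_w̄ ℓ`;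
applying `id ⊗ L_w̄` instead gives `Δᵒᵖ(χ) = (id ⊗ R_w̄)Δ(ℓ) = Δ(R_w̄ ℓ) = Δ(χ)`.
-/

open Coalgebra LinearMap

section
variable {k H : Type*} [CommSemiring k] [Semiring H] [Bialgebra k H]

theorem comul_comp_actL (f : H →ₗ[k] k) :
    comul ∘ₗ actL f = (actL f).rTensor H ∘ₗ comul := by
  have natural : comul ∘ₗ (TensorProduct.lid k H).toLinearMap ∘ₗ f.rTensor H =
      (TensorProduct.lid k (H ⊗[k] H)).toLinearMap ∘ₗ f.rTensor (H ⊗[k] H) ∘ₗ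
        (comul (R := k)).lTensor H := by
    ext; simp
  have unassoc : (TensorProduct.lid k (H ⊗[k] H)).toLinearMap ∘ₗ f.rTensor (H ⊗[k] H) ∘ₗ
      (TensorProduct.assoc k H H H).toLinearMap =
      ((TensorProduct.lid k H).toLinearMap ∘ₗ f.rTensor H).rTensor H := by
    apply TensorProduct.ext_threefold; intro x y z; simp [TensorProduct.smul_tmul']
  calc comul ∘ₗ actL f
      = (TensorProduct.lid k (H ⊗[k] H)).toLinearMap ∘ₗ f.rTensor (H ⊗[k] H) ∘ₗ
          (comul (R := k)).lTensor H ∘ₗ comul := by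
        rw [← comp_assoc _ (lTensor _ _), ← comp_assoc _ (_ ∘ₗ lTensor _ _), ← natural]; rfl
    _ = (TensorProduct.lid k (H ⊗[k] H)).toLinearMap ∘ₗ f.rTensor (H ⊗[k] H) ∘ₗ
          (TensorProduct.assoc k H H H).toLinearMap ∘ₗ (comul (R := k)).rTensor H ∘ₗ comul := by
        rw [← coassoc]
    _ = (actL f).rTensor H ∘ₗ comul := by
        simp only [← comp_assoc, unassoc, ← rTensor_comp]; rfl

theorem comul_comp_actR (f : H →ₗ[k] k) :
    comul ∘ₗ actR f = (actR f).lTensor H ∘ₗ comul := by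
  have natural : comul ∘ₗ (TensorProduct.rid k H).toLinearMap ∘ₗ f.lTensor H =
      (TensorProduct.rid k (H ⊗[k] H)).toLinearMap ∘ₗ f.lTensor (H ⊗[k] H) ∘ₗ
        (comul (R := k)).rTensor H := by
    ext; simp
  have reassoc : (TensorProduct.rid k (H ⊗[k] H)).toLinearMap ∘ₗ f.lTensor (H ⊗[k] H) ∘ₗ
      (TensorProduct.assoc k H H H).symm.toLinearMap =
      ((TensorProduct.rid k H).toLinearMap ∘ₗ f.lTensor H).lTensor H := by
    ext; simp [TensorProduct.smul_tmul']
  calc comul ∘ₗ actR f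
      = (TensorProduct.rid k (H ⊗[k] H)).toLinearMap ∘ₗ f.lTensor (H ⊗[k] H) ∘ₗ
          (comul (R := k)).rTensor H ∘ₗ comul := by
        rw [← comp_assoc _ (rTensor _ _), ← comp_assoc _ (_ ∘ₗ rTensor _ _), ← natural]; rfl
    _ = (TensorProduct.rid k (H ⊗[k] H)).toLinearMap ∘ₗ f.lTensor (H ⊗[k] H) ∘ₗ
          (TensorProduct.assoc k H H H).symm.toLinearMap ∘ₗ (comul (R := k)).lTensor H ∘ₗ
            comul := by
        rw [coassoc_symm]
    _ = (actR f).lTensor H ∘ₗ comul := by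
        simp only [← comp_assoc, reassoc, ← lTensor_comp]; rfl

theorem comul_actL (f : H →ₗ[k] k) (x : H) : comul (actL f x) = (actL f).rTensor H (comul x) :=
  congr($(comul_comp_actL f) x)

theorem comul_actR (f : H →ₗ[k] k) (x : H) : comul (actR f x) = (actR f).lTensor H (comul x) :=
  congr($(comul_comp_actR f) x)

theorem comp_actL (f g : H →ₗ[k] k) : g ∘ₗ actL f = conv f g := by
  have : g ∘ₗ (TensorProduct.lid k H).toLinearMap ∘ₗ map f id = mul' k k ∘ₗ map f g := by
    ext; simp
  simp only [actL, conv, ← comp_assoc, this]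

theorem comp_actR (f g : H →ₗ[k] k) : g ∘ₗ actR f = conv g f := by
  have : g ∘ₗ (TensorProduct.rid k H).toLinearMap ∘ₗ map id f = mul' k k ∘ₗ map g f := by
    ext; simp [mul_comm]
  simp only [actR, conv, ← comp_assoc, this]

theorem actL_counit : actL (counit : H →ₗ[k] k) = LinearMap.id := by
  ext x
  simp only [actL, ← rTensor_def, comp_apply, rTensor_counit_comul]
  simp

theorem conv_counit_left (f : H →ₗ[k] k) : conv counit f = f := by
  ext x
  simp only [conv, ← lTensor_comp_rTensor, comp_apply, rTensor_counit_comul]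
  simp

theorem actL_comp_actL (f g : H →ₗ[k] k) : actL f ∘ₗ actL g = actL (conv g f) := by
  calc actL f ∘ₗ actL g
      = (TensorProduct.lid k H).toLinearMap ∘ₗ f.rTensor H ∘ₗ (actL g).rTensor H ∘ₗ comul := by
        rw [← comul_comp_actL]; rfl
    _ = actL (conv g f) := by
        rw [← comp_assoc comul, ← rTensor_comp, comp_actL]; rfl

theorem actL_comp_actR (f g : H →ₗ[k] k) : actL f ∘ₗ actR g = actR g ∘ₗ actL f := by
  have natural : (TensorProduct.lid k H).toLinearMap ∘ₗ (actR g).lTensor k =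
      actR g ∘ₗ (TensorProduct.lid k H).toLinearMap := by
    ext; simp
  calc actL f ∘ₗ actR g
      = (TensorProduct.lid k H).toLinearMap ∘ₗ f.rTensor H ∘ₗ (actR g).lTensor H ∘ₗ comul := by
        rw [← comul_comp_actR]; rfl
    _ = (TensorProduct.lid k H).toLinearMap ∘ₗ (actR g).lTensor k ∘ₗ f.rTensor H ∘ₗ comul := by
        rw [← comp_assoc comul, rTensor_comp_lTensor, ← lTensor_comp_rTensor, comp_assoc]
    _ = actR g ∘ₗ actL f := by
        rw [← comp_assoc _ (lTensor _ _), natural]; rfl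

variable {f g : H →ₗ[k] k}

theorem comp_actR_comp_actL_of_conv_eq_counit (hfg : conv f g = counit) (h : H →ₗ[k] k) :
    g ∘ₗ actR h ∘ₗ actL f = h := by
  rw [← actL_comp_actR, ← comp_assoc, comp_actL, hfg, comp_actR, conv_counit_left]

theorem actL_comp_actR_comp_actL_of_conv_eq_counit (hfg : conv f g = counit) (h : H →ₗ[k] k) :
    actL g ∘ₗ actR h ∘ₗ actL f = actR h := by
  rw [← comp_assoc, actL_comp_actR, comp_assoc, actL_comp_actL, hfg, actL_counit, comp_id]

variable {T : H →ₗ[k] H} {ℓ : H}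

theorem actL_eq_actR_of_comm_comul (hgT : g ∘ₗ T = g)
    (hℓ : TensorProduct.comm k H H (comul ℓ) = T.lTensor H (comul ℓ)) :
    actL g ℓ = actR g ℓ := by
  have swap : (TensorProduct.lid k H).toLinearMap ∘ₗ g.rTensor H =
      (TensorProduct.rid k H).toLinearMap ∘ₗ g.lTensor H ∘ₗ
        (TensorProduct.comm k H H).toLinearMap := by
    ext; simp
  calc actL g ℓ
      = TensorProduct.rid k H (g.lTensor H (TensorProduct.comm k H H (comul ℓ))) :=
        congr($swap (comul ℓ))
    _ = actR g ℓ := by rw [hℓ, ← lTensor_comp_apply, hgT]; rfl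

theorem comm_comul_actL_of_comm_comul (hgT : g ∘ₗ T = g) (hLT : actL g ∘ₗ T = actR g)
    (hℓ : TensorProduct.comm k H H (comul ℓ) = T.lTensor H (comul ℓ)) :
    TensorProduct.comm k H H (comul (actL g ℓ)) = comul (actL g ℓ) :=
  calc TensorProduct.comm k H H (comul (actL g ℓ))
      = (actL g).lTensor H (TensorProduct.comm k H H (comul ℓ)) := by
        rw [lTensor_comm, comul_actL]
    _ = (actR g).lTensor H (comul ℓ) := by rw [hℓ, ← lTensor_comp_apply, hLT]
    _ = comul (actL g ℓ) := by
        rw [actL_eq_actR_of_comm_comul hgT hℓ, comul_actR]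

end

theorem dual_quantum_trace_gives_dual_trace_general
    {k H : Type*} [Field k] [Ring H] [HopfAlgebra k H]
    (w : H →ₐ[k] k) (wbar : H →ₗ[k] k)
    (hw1 : conv w.toLinearMap wbar = Coalgebra.counit)
    (hS2 : (HopfAlgebra.antipode k : H →ₗ[k] H) ∘ₗ HopfAlgebra.antipode k
      = actR wbar ∘ₗ actL w.toLinearMap)
    (ℓ : H)
    (hℓ : TensorProduct.comm k H H (Coalgebra.comul ℓ) =
      TensorProduct.map LinearMap.id
        ((HopfAlgebra.antipode k : H →ₗ[k] H) ∘ₗ HopfAlgebra.antipode k) (Coalgebra.comul ℓ)) :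
    TensorProduct.comm k H H (Coalgebra.comul (actL wbar ℓ)) =
      Coalgebra.comul (actL wbar ℓ) := by
  rw [hS2] at hℓ
  exact comm_comul_actL_of_comm_comul (comp_actR_comp_actL_of_conv_eq_counit hw1 wbar)
    (actL_comp_actR_comp_actL_of_conv_eq_counit hw1 wbar) hℓ

/-- Let `H` be a Hopf algebra with invertible antipode and copivotal form `w` with
convolution inverse `w̄`, and let `ℓ ∈ H` be a dual quantum trace
(`Δᵒᵖ(ℓ) = (id ⊗ S²)Δ(ℓ)`).  Then `χ := w̄(ℓ⁽¹⁾)·ℓ⁽²⁾` is a dual trace: `Δᵒᵖ(χ) = Δ(χ)`. -/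
theorem dual_quantum_trace_gives_dual_trace
    {k H : Type*} [Field k] [Ring H] [HopfAlgebra k H]
    (w : H →ₐ[k] k) (wbar : H →ₗ[k] k)
    (hw1 : conv w.toLinearMap wbar = Coalgebra.counit)
    (hw2 : conv wbar w.toLinearMap = Coalgebra.counit)
    (hS2 : (HopfAlgebra.antipode k : H →ₗ[k] H) ∘ₗ HopfAlgebra.antipode k
      = actR wbar ∘ₗ actL w.toLinearMap)
    (hSbij : Function.Bijective (HopfAlgebra.antipode k : H →ₗ[k] H))
    (ℓ : H)
    (hℓ : TensorProduct.comm k H H (Coalgebra.comul ℓ) =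
      TensorProduct.map LinearMap.id
        ((HopfAlgebra.antipode k : H →ₗ[k] H) ∘ₗ HopfAlgebra.antipode k) (Coalgebra.comul ℓ)) :
    TensorProduct.comm k H H (Coalgebra.comul (actL wbar ℓ)) =
      Coalgebra.comul (actL wbar ℓ) :=
  dual_quantum_trace_gives_dual_trace_general w wbar hw1 hS2 ℓ hℓ
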